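/- Every ℂ-linear functional ψ on the smooth boundary algebra 𝔇ⁿ_smooth satisfying ψ(R^{g_1}_1 ⋯ R^{g_n}_n · S̃^{(h_1)}_1 ⋯ S̃^{(h_{n−1})}_{n−1}) = |G|^{1−n} whenever g_i = e for all i, and = 0 otherwise (for all (g_i) ∈ G^n, (h_i) ∈ G^{n−1}), is tracial: ψ(x y) = ψ(y x) for all x, y ∈ 𝔇ⁿ_smooth. -/

import Mathlib

noncomputable section

open scoped BigOperators

/-- The Hilbert space `H_n = ℂ[G]^{⊗ n}`, realized as functions `G^n → ℂ`;
the basis ket `|g₁,…,g_n⟩` is the indicator function of `(g₁,…,g_n)`. -/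
abbrev Hn (G : Type) (n : ℕ) : Type := (Fin n → G) → ℂ

variable (G : Type) [Group G] [Fintype G] [DecidableEq G] (n : ℕ)

/-- Diagonal operator with diagonal entries `c` (in the ket basis). -/
def diagOp (c : (Fin n → G) → ℂ) : Module.End ℂ (Hn G n) where
  toFun f := fun x => c x * f x
  map_add' f g := by funext x; simp only [Pi.add_apply]; ring
  map_smul' r f := by
    funext x
    simp only [Pi.smul_apply, smul_eq_mul, RingHom.id_apply]
    ring

/-- The operator sending the ket `|y⟩` to the ket `|σ y⟩`, where `τ = σ⁻¹`. -/
def permOp (τ : (Fin n → G) → (Fin n → G)) : Module.End ℂ (Hn G n) :=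
  LinearMap.funLeft ℂ ℂ τ

/-- `R^g_i`: right translation at site `i`, `|…, g_i, …⟩ ↦ |…, g_i g, …⟩`. -/
def Rop (i : Fin n) (g : G) : Module.End ℂ (Hn G n) :=
  permOp G n fun x => Function.update x i (x i * g⁻¹)

/-- `S̃^{(h)}` at sites `i` and `j` (used with `j = i + 1`): the projection onto
kets with `g_i⁻¹ g_j = h`. -/
def Sop (i j : Fin n) (h : G) : Module.End ℂ (Hn G n) :=
  diagOp G n fun x => if (x i)⁻¹ * x j = h then 1 else 0

/-- `U_g`: the diagonal left translation `|g₁,…,g_n⟩ ↦ |g g₁,…,g g_n⟩`. -/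
def Uop (g : G) : Module.End ℂ (Hn G n) :=
  permOp G n fun x k => g⁻¹ * x k

/-- Generators `R^g_i` and `S̃^{(h)}_i` of the smooth boundary algebra. -/
def smoothGens : Set (Module.End ℂ (Hn G n)) :=
  {T | ∃ (i : Fin n) (g : G), T = Rop G n i g} ∪
  {T | ∃ (i j : Fin n) (h : G), (i : ℕ) + 1 = (j : ℕ) ∧ T = Sop G n i j h}

/-- The smooth boundary algebra `𝔇ⁿ_smooth`. -/
def DSmooth : Subalgebra ℂ (Module.End ℂ (Hn G n)) :=
  Algebra.adjoin ℂ (smoothGens G n)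

/-- The site `i` (0-indexed) of a neighboring pair, as an element of `Fin n`. -/
def idx1 {n : ℕ} (i : Fin (n - 1)) : Fin n := ⟨i, by have := i.isLt; omega⟩

/-- The site `i + 1` of a neighboring pair, as an element of `Fin n`. -/
def idx2 {n : ℕ} (i : Fin (n - 1)) : Fin n := ⟨(i : ℕ) + 1, by have := i.isLt; omega⟩

/-- The word `R^{g₁}_1 ⋯ R^{g_n}_n · S̃^{(h₁)}_1 ⋯ S̃^{(h_{n-1})}_{n-1}`. -/
def smoothWord (g : Fin n → G) (h : Fin (n - 1) → G) : Module.End ℂ (Hn G n) :=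
  (List.ofFn fun i : Fin n => Rop G n i (g i)).prod *
  (List.ofFn fun i : Fin (n - 1) => Sop G n (idx1 i) (idx2 i) (h i)).prod

namespace Stmt12Aux

set_option linter.unusedSectionVars false

variable {G : Type} [Group G] [Fintype G] [DecidableEq G] {n : ℕ}

/-- The simultaneous right-translation map on configurations. -/
def tfun (g : Fin n → G) : (Fin n → G) → (Fin n → G) := fun x k => x k * (g k)⁻¹

/-- The indicator of the constraints `x_i⁻¹ x_{i+1} = h i`. -/
def cfun (h : Fin (n - 1) → G) : (Fin n → G) → ℂ :=
  fun x => if ∀ i, (x (idx1 i))⁻¹ * x (idx2 i) = h i then 1 else 0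

lemma diagOp_apply (c : (Fin n → G) → ℂ) (f : Hn G n) (x) :
    diagOp G n c f x = c x * f x := rfl

lemma permOp_apply (τ : (Fin n → G) → (Fin n → G)) (f : Hn G n) (x) :
    permOp G n τ f x = f (τ x) := rfl

lemma permOp_id : permOp G n (fun x => x) = 1 := by
  apply LinearMap.ext; intro f; rfl

lemma permOp_mul (τ τ' : (Fin n → G) → (Fin n → G)) :
    permOp G n τ * permOp G n τ' = permOp G n (τ' ∘ τ) := by
  apply LinearMap.ext; intro f; rfl

lemma diagOp_one : diagOp G n (fun _ => 1) = 1 := by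
  apply LinearMap.ext; intro f; funext x
  simp [diagOp_apply, Module.End.one_apply]

lemma diagOp_mul (c d : (Fin n → G) → ℂ) :
    diagOp G n c * diagOp G n d = diagOp G n (fun x => c x * d x) := by
  apply LinearMap.ext; intro f; funext x
  simp only [Module.End.mul_apply, diagOp_apply]; ring

lemma permOp_list_prod (l : List ((Fin n → G) → (Fin n → G))) :
    (l.map (permOp G n)).prod = permOp G n (fun x => l.foldl (fun y τ => τ y) x) := by
  induction l with
  | nil => simpa using (permOp_id (G := G) (n := n)).symm
  | cons a t ih =>
      simp only [List.map_cons, List.prod_cons, ih, permOp_mul, List.foldl_cons]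
      rfl

lemma diagOp_list_prod (l : List ((Fin n → G) → ℂ)) :
    (l.map (diagOp G n)).prod = diagOp G n (fun x => (l.map (fun c => c x)).prod) := by
  induction l with
  | nil => simpa using (diagOp_one (G := G) (n := n)).symm
  | cons a t ih =>
      simp only [List.map_cons, List.prod_cons, ih, diagOp_mul]

lemma foldl_upd (u : Fin n → G) (l : List (Fin n)) (hl : l.Nodup) (x : Fin n → G) :
    l.foldl (fun y i => Function.update y i (y i * (u i)⁻¹)) x
      = fun k => if k ∈ l then x k * (u k)⁻¹ else x k := by
  induction l generalizing x with
  | nil => simp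
  | cons i t ih =>
      have hnd := List.nodup_cons.mp hl
      rw [List.foldl_cons, ih hnd.2]
      funext k
      by_cases hkt : k ∈ t
      · have hki : k ≠ i := fun h => hnd.1 (h ▸ hkt)
        simp [hkt, hki, Function.update_apply]
      · by_cases hki : k = i
        · subst hki
          simp [hkt]
        · simp [hkt, hki, Function.update_apply]

lemma Rprod (g : Fin n → G) :
    (List.ofFn fun i : Fin n => Rop G n i (g i)).prod = permOp G n (tfun g) := by
  have h1 : (List.ofFn fun i : Fin n => Rop G n i (g i))
      = (List.finRange n).map
          ((permOp G n) ∘ fun i x => Function.update x i (x i * (g i)⁻¹)) := by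
    rw [List.ofFn_eq_map]; rfl
  rw [h1, ← List.map_map, permOp_list_prod]
  congr 1
  funext x
  rw [List.foldl_map, foldl_upd g (List.finRange n) (List.nodup_finRange n) x]
  funext k
  simp [tfun, List.mem_finRange]

lemma Sprod (h : Fin (n - 1) → G) :
    (List.ofFn fun i : Fin (n - 1) => Sop G n (idx1 i) (idx2 i) (h i)).prod
      = diagOp G n (cfun h) := by
  have h1 : (List.ofFn fun i : Fin (n - 1) => Sop G n (idx1 i) (idx2 i) (h i))
      = (List.ofFn fun i : Fin (n - 1) =>
          (fun x : Fin n → G => if (x (idx1 i))⁻¹ * x (idx2 i) = h i then (1:ℂ) else 0)).map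
          (diagOp G n) := by
    rw [List.map_ofFn]; rfl
  rw [h1, diagOp_list_prod]
  congr 1
  funext x
  rw [List.map_ofFn]
  have : (List.ofFn ((fun c : (Fin n → G) → ℂ => c x) ∘ fun i : Fin (n - 1) =>
      fun x : Fin n → G => if (x (idx1 i))⁻¹ * x (idx2 i) = h i then (1:ℂ) else 0)).prod
      = ∏ i : Fin (n - 1), (if (x (idx1 i))⁻¹ * x (idx2 i) = h i then (1:ℂ) else 0) :=
    List.prod_ofFn
  rw [this, Finset.prod_boole]
  simp [cfun]

lemma smoothWord_eq (g : Fin n → G) (h : Fin (n - 1) → G) :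
    smoothWord G n g h = permOp G n (tfun g) * diagOp G n (cfun h) := by
  rw [smoothWord, Rprod, Sprod]

lemma cfun_eq (h : Fin (n - 1) → G) (x : Fin n → G) :
    cfun h x = if (fun i => (x (idx1 i))⁻¹ * x (idx2 i)) = h then 1 else 0 := by
  rw [cfun]
  congr 1
  simp [funext_iff]

lemma tfun_one : tfun (1 : Fin n → G) = fun x => x := by
  funext x k; simp [tfun]

lemma smoothWord_one (h : Fin (n - 1) → G) :
    smoothWord G n 1 h = diagOp G n (cfun h) := by
  rw [smoothWord_eq, tfun_one, permOp_id, one_mul]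

lemma cfun_shift (g' : Fin n → G) (h : Fin (n - 1) → G) (y : Fin n → G) :
    cfun h (fun k => y k * g' k)
      = cfun (fun i => g' (idx1 i) * h i * (g' (idx2 i))⁻¹) y := by
  rw [cfun, cfun]
  congr 1
  refine forall_congr ?_
  intro i
  apply propext
  constructor
  · intro hi
    rw [← hi]; group
  · intro hi
    have h2 : h i = (g' (idx1 i))⁻¹ * (g' (idx1 i) * h i * (g' (idx2 i))⁻¹) * g' (idx2 i) := by
      group
    rw [h2, ← hi]; group

lemma PD_mul (g g' : Fin n → G) (h h' : Fin (n - 1) → G) :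
    smoothWord G n g h * smoothWord G n g' h' =
      if (∀ i, g' (idx1 i) * h i * (g' (idx2 i))⁻¹ = h' i)
      then smoothWord G n (fun k => g' k * g k) h' else 0 := by
  rw [smoothWord_eq, smoothWord_eq, smoothWord_eq]
  apply LinearMap.ext; intro f; funext x
  have hy : tfun g' (tfun g x) = tfun (fun k => g' k * g k) x := by
    funext k; simp only [tfun, mul_inv_rev]; group
  have hx : tfun g x = fun k => (tfun (fun k => g' k * g k) x) k * g' k := by
    funext k; simp only [tfun, mul_inv_rev]; group
  set y := tfun (fun k => g' k * g k) x with hy'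
  have lhs : (smoothWord G n g h * smoothWord G n g' h') f x
      = cfun h (tfun g x) * (cfun h' y * f y) := by
    rw [smoothWord_eq, smoothWord_eq]
    simp only [Module.End.mul_apply, permOp_apply, diagOp_apply, hy]
  rw [← smoothWord_eq, ← smoothWord_eq, lhs, hx, cfun_shift]
  by_cases hc : ∀ i, g' (idx1 i) * h i * (g' (idx2 i))⁻¹ = h' i
  · rw [if_pos hc]
    have : (fun i => g' (idx1 i) * h i * (g' (idx2 i))⁻¹) = h' := funext hc
    rw [this]
    simp only [Module.End.mul_apply, permOp_apply, diagOp_apply, ← hy']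
    rw [cfun, ← mul_assoc]
    split_ifs <;> ring
  · rw [if_neg hc]
    obtain ⟨i, hi⟩ := not_forall.mp hc
    rw [cfun, cfun]
    simp only [LinearMap.zero_apply, Pi.zero_apply]
    split_ifs with h1 h2
    · exact absurd ((h1 i).symm.trans (h2 i)) hi
    · ring
    · ring
    · ring

lemma word_mem (g : Fin n → G) (h : Fin (n - 1) → G) :
    smoothWord G n g h ∈ DSmooth G n := by
  rw [smoothWord]
  refine mul_mem ?_ ?_
  · refine Subalgebra.list_prod_mem _ ?_
    intro T hT
    obtain ⟨i, rfl⟩ := List.mem_ofFn.mp hT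
    exact Algebra.subset_adjoin (Or.inl ⟨i, g i, rfl⟩)
  · refine Subalgebra.list_prod_mem _ ?_
    intro T hT
    obtain ⟨i, rfl⟩ := List.mem_ofFn.mp hT
    exact Algebra.subset_adjoin (Or.inr ⟨idx1 i, idx2 i, h i, rfl, rfl⟩)

/-- The span of the words. -/
def Vspan (G : Type) [Group G] [Fintype G] [DecidableEq G] (n : ℕ) :
    Submodule ℂ (Module.End ℂ (Hn G n)) :=
  Submodule.span ℂ {T | ∃ g h, T = smoothWord G n g h}

lemma word_mem_V (g : Fin n → G) (h : Fin (n - 1) → G) :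
    smoothWord G n g h ∈ Vspan G n :=
  Submodule.subset_span ⟨g, h, rfl⟩

lemma one_eq_sum : (1 : Module.End ℂ (Hn G n)) = ∑ h : Fin (n - 1) → G, smoothWord G n 1 h := by
  apply LinearMap.ext; intro f; funext x
  rw [LinearMap.sum_apply, Finset.sum_apply]
  have hterm : ∀ h : Fin (n - 1) → G, smoothWord G n 1 h f x
      = (if (fun i => (x (idx1 i))⁻¹ * x (idx2 i)) = h then 1 else 0) * f x := by
    intro h; rw [smoothWord_one, diagOp_apply, cfun_eq]
  rw [Finset.sum_congr rfl fun h _ => hterm h, ← Finset.sum_mul, Finset.sum_ite_eq]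
  simp [Module.End.one_apply]

lemma one_mem_V : (1 : Module.End ℂ (Hn G n)) ∈ Vspan G n := by
  rw [one_eq_sum]
  exact Submodule.sum_mem _ fun h _ => word_mem_V 1 h

lemma mul_mem_V : ∀ a b : Module.End ℂ (Hn G n),
    a ∈ Vspan G n → b ∈ Vspan G n → a * b ∈ Vspan G n := by
  have base : ∀ (g : Fin n → G) (h : Fin (n - 1) → G) (g' : Fin n → G) (h' : Fin (n - 1) → G),
      smoothWord G n g h * smoothWord G n g' h' ∈ Vspan G n := by
    intro g h g' h'
    rw [PD_mul]
    split_ifs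
    · exact word_mem_V _ _
    · exact Submodule.zero_mem _
  intro a b ha hb
  induction ha using Submodule.span_induction with
  | mem a' ha' =>
      obtain ⟨g, h, rfl⟩ := ha'
      induction hb using Submodule.span_induction with
      | mem b' hb' => obtain ⟨g', h', rfl⟩ := hb'; exact base g h g' h'
      | zero => simpa using Submodule.zero_mem _
      | add u v hu hv pu pv => rw [mul_add]; exact Submodule.add_mem _ pu pv
      | smul c u hu pu => rw [mul_smul_comm]; exact Submodule.smul_mem _ _ pu
  | zero => simpa using Submodule.zero_mem _
  | add u v hu hv pu pv => rw [add_mul]; exact Submodule.add_mem _ pu pv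
  | smul c u hu pu => rw [smul_mul_assoc]; exact Submodule.smul_mem _ _ pu

lemma Rop_eq_sum (i : Fin n) (g : G) :
    Rop G n i g = ∑ h' : Fin (n - 1) → G, smoothWord G n (Pi.mulSingle i g) h' := by
  have h1 : permOp G n (tfun (Pi.mulSingle i g)) = Rop G n i g := by
    rw [Rop]
    congr 1
    funext x k
    by_cases hk : k = i
    · subst hk; simp [tfun, Function.update_apply]
    · simp [tfun, Function.update_apply, hk, Pi.mulSingle_apply]
  calc Rop G n i g = Rop G n i g * 1 := (mul_one _).symm
    _ = permOp G n (tfun (Pi.mulSingle i g)) * ∑ h' : Fin (n-1) → G, smoothWord G n 1 h' := by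
        rw [h1, ← one_eq_sum]
    _ = ∑ h' : Fin (n - 1) → G, smoothWord G n (Pi.mulSingle i g) h' := by
        rw [Finset.mul_sum]
        refine Finset.sum_congr rfl ?_
        intro h' _
        rw [smoothWord_one, smoothWord_eq]

lemma Sop_eq_sum (i j : Fin n) (hh : G) (hij : (i : ℕ) + 1 = (j : ℕ)) :
    Sop G n i j hh = ∑ h' : Fin (n - 1) → G,
      (if h' ⟨(i : ℕ), by have := j.isLt; omega⟩ = hh then (1:ℂ) else 0) • smoothWord G n 1 h' := by
  set k : Fin (n - 1) := ⟨(i : ℕ), by have := j.isLt; omega⟩ with hk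
  have hki : idx1 k = i := Fin.ext rfl
  have hkj : idx2 k = j := Fin.ext hij
  apply LinearMap.ext; intro f; funext x
  have rhs : (∑ h' : Fin (n - 1) → G,
        (if h' k = hh then (1:ℂ) else 0) • smoothWord G n 1 h') f x
      = ∑ h' : Fin (n - 1) → G, (if h' k = hh then (1:ℂ) else 0) *
          ((if (fun i' => (x (idx1 i'))⁻¹ * x (idx2 i')) = h' then (1:ℂ) else 0) * f x) := by
    rw [LinearMap.sum_apply, Finset.sum_apply]
    refine Finset.sum_congr rfl fun h' _ => ?_
    rw [LinearMap.smul_apply, Pi.smul_apply, smoothWord_one, diagOp_apply, cfun_eq, smul_eq_mul]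
  rw [rhs, Finset.sum_eq_single (fun i' => (x (idx1 i'))⁻¹ * x (idx2 i'))]
  · have hbeta : (fun i' => (x (idx1 i'))⁻¹ * x (idx2 i')) k = (x i)⁻¹ * x j := by
      simp only []
      rw [hki, hkj]
    rw [if_pos rfl, hbeta, Sop, diagOp_apply]
    ring
  · intro b _ hb
    rw [if_neg (show ¬((fun i' => (x (idx1 i'))⁻¹ * x (idx2 i')) = b) from fun e => hb e.symm)]
    ring
  · intro hmem
    exact absurd (Finset.mem_univ _) hmem

lemma DSmooth_le_V : ∀ a ∈ DSmooth G n, a ∈ Vspan G n := by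
  have : DSmooth G n ≤ (Vspan G n).toSubalgebra one_mem_V mul_mem_V := by
    apply Algebra.adjoin_le
    rintro T (⟨i, g, rfl⟩ | ⟨i, j, hh, hij, rfl⟩)
    · show Rop G n i g ∈ Vspan G n
      rw [Rop_eq_sum]
      exact Submodule.sum_mem _ fun h' _ => word_mem_V _ _
    · show Sop G n i j hh ∈ Vspan G n
      rw [Sop_eq_sum i j hh hij]
      exact Submodule.sum_mem _ fun h' _ =>
        Submodule.smul_mem _ _ (word_mem_V _ _)
  exact fun a ha => this ha

end Stmt12Aux

open Stmt12Aux in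
set_option synthInstance.maxHeartbeats 1000000 in
set_option maxHeartbeats 1000000 in
/-- any linear functional on `𝔇ⁿ_smooth` taking the value `|G|^{1-n}`
on the words with all `g_i = e` and `0` on the other words is tracial. -/
theorem stmt12 (hn : 1 ≤ n) (ψ : ↥(DSmooth G n) →ₗ[ℂ] ℂ)
    (hψ : ∀ (g : Fin n → G) (h : Fin (n - 1) → G)
        (hmem : smoothWord G n g h ∈ DSmooth G n),
      ψ ⟨smoothWord G n g h, hmem⟩ =
        if ∀ i, g i = 1 then ((Fintype.card G : ℂ) ^ (n - 1))⁻¹ else 0) :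
    ∀ x y : ↥(DSmooth G n), ψ (x * y) = ψ (y * x) := by
  classical
  obtain ⟨Ψ, hΨ⟩ := LinearMap.exists_extend (p := Subalgebra.toSubmodule (DSmooth G n)) ψ
  have hval : ∀ (g : Fin n → G) (h : Fin (n - 1) → G),
      Ψ (smoothWord G n g h) =
        if ∀ i, g i = 1 then ((Fintype.card G : ℂ) ^ (n - 1))⁻¹ else 0 := by
    intro g h
    have hm := word_mem (G := G) (n := n) g h
    calc Ψ (smoothWord G n g h)
        = ψ ⟨smoothWord G n g h, hm⟩ := DFunLike.congr_fun hΨ ⟨smoothWord G n g h, hm⟩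
      _ = if ∀ i, g i = 1 then ((Fintype.card G : ℂ) ^ (n - 1))⁻¹ else 0 := hψ g h hm
  have hword : ∀ (g g' : Fin n → G) (h h' : Fin (n - 1) → G),
      Ψ (smoothWord G n g h * smoothWord G n g' h') =
        Ψ (smoothWord G n g' h' * smoothWord G n g h) := by
    intro g g' h h'
    rw [PD_mul, PD_mul, apply_ite Ψ, apply_ite Ψ, map_zero]
    simp only [hval]
    by_cases hA : ∀ k, g k * g' k = 1
    · have hA' : ∀ k, (g k)⁻¹ = g' k := fun k => inv_eq_of_mul_eq_one_right (hA k)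
      have hB : ∀ k, g' k * g k = 1 := fun k => by rw [← hA' k]; group
      have hcond : (∀ i, g' (idx1 i) * h i * (g' (idx2 i))⁻¹ = h' i)
          ↔ (∀ i, g (idx1 i) * h' i * (g (idx2 i))⁻¹ = h i) := by
        constructor
        · intro hc i
          rw [← hc i, ← hA' (idx1 i), ← hA' (idx2 i)]; group
        · intro hc i
          rw [← hc i, ← hA' (idx1 i), ← hA' (idx2 i)]; group
      rw [if_pos hB, if_pos hA]
      exact if_congr hcond rfl rfl
    · have hB : ¬ ∀ k, g' k * g k = 1 := fun hB => hA fun k => by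
        rw [← inv_eq_of_mul_eq_one_right (hB k)]; group
      rw [if_neg hB, if_neg hA]
      simp
  have key : ∀ a ∈ Vspan G n, ∀ b ∈ Vspan G n, Ψ (a * b) = Ψ (b * a) := by
    intro a ha
    induction ha using Submodule.span_induction with
    | mem a' ha' =>
        obtain ⟨g, h, rfl⟩ := ha'
        intro b hb
        induction hb using Submodule.span_induction with
        | mem b' hb' => obtain ⟨g', h', rfl⟩ := hb'; exact hword g g' h h'
        | zero => simp
        | add u v hu hv pu pv => rw [mul_add, add_mul, map_add, map_add, pu, pv]
        | smul c u hu pu => rw [mul_smul_comm, smul_mul_assoc, map_smul, map_smul, pu]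
    | zero => intro b hb; simp
    | add u v hu hv pu pv =>
        intro b hb
        rw [add_mul, mul_add, map_add, map_add, pu b hb, pv b hb]
    | smul c u hu pu =>
        intro b hb
        rw [smul_mul_assoc, mul_smul_comm, map_smul, map_smul, pu b hb]
  intro x y
  have hx := DSmooth_le_V (G := G) (n := n) x.1 x.2
  have hy := DSmooth_le_V (G := G) (n := n) y.1 y.2
  have h1 : ψ (x * y) = Ψ (x.1 * y.1) := (DFunLike.congr_fun hΨ (x * y)).symm
  have h2 : ψ (y * x) = Ψ (y.1 * x.1) := (DFunLike.congr_fun hΨ (y * x)).symm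
  rw [h1, h2]
  exact key _ hx _ hy
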